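/- The Space KAM implements Closed Call-by-Name: for every closed λ-term t, there is a complete weak-head-reduction sequence t →wh^n u if and only if there is a complete Space KAM run ρ from the initial state (t, ε, ε) whose final state decodes to u and which contains exactly n β-transitions (transitions →βw or →β¬w). -/

import Mathlib

set_option autoImplicit false

/-! λ-terms with variable names in ℕ. -/
inductive Term : Type
  | var : ℕ → Term
  | lam : ℕ → Term → Term
  | app : Term → Term → Term
deriving DecidableEq

namespace Term

/-- Free variables. -/
def fv : Term → Finset ℕ
  | var x => {x}
  | lam x t => fv t \ {x}
  | app t u => fv t ∪ fv u

/-- A term is closed if it has no free variables. -/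
def closed (t : Term) : Prop := t.fv = ∅

/-- Substitution of `u` for the free occurrences of `x`; it is capture-avoiding
whenever the substituted term `u` is closed, which is the only case arising in
Closed Call-by-Name. -/
def subst (x : ℕ) (u : Term) : Term → Term
  | var y => if y = x then u else var y
  | lam y t => if y = x then lam y t else lam y (subst x u t)
  | app t r => app (subst x u t) (subst x u r)

/-- In-order (left-to-right) enumeration of the constructors (as subterm occurrences). -/
def inorder : Term → List Term
  | var x => [var x]
  | lam x t => lam x t :: inorder t
  | app t u => inorder t ++ app t u :: inorder u

/-- Membership in the deterministic λ-calculus `Λdet`: the right subterm of every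
application is a variable or an abstraction. -/
def IsDet : Term → Prop
  | var _ => True
  | lam _ t => IsDet t
  | app t u => IsDet t ∧ IsDet u ∧ ((∃ x, u = var x) ∨ ∃ x r, u = lam x r)

end Term

/-- Weak head reduction: `(λx.t) u r1 … rh →wh t{x:=u} r1 … rh`. -/
inductive Whr : Term → Term → Prop
  | beta (x : ℕ) (t u : Term) : Whr (Term.app (Term.lam x t) u) (Term.subst x u t)
  | appL {t t' : Term} (u : Term) : Whr t t' → Whr (Term.app t u) (Term.app t' u)

def WhNormal (t : Term) : Prop := ∀ u, ¬ Whr t u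

/-- `NSteps R n a b`: exactly `n` `R`-steps from `a` to `b`. -/
inductive NSteps {α : Type _} (R : α → α → Prop) : ℕ → α → α → Prop
  | refl (a : α) : NSteps R 0 a a
  | head {a b c : α} {n : ℕ} : R a b → NSteps R n b c → NSteps R (n + 1) a c

/-! Closures and (local) environments. -/
mutual
  inductive Clo : Type
    | mk : Term → Env → Clo
  inductive Env : Type
    | nil : Env
    | cons : ℕ → Clo → Env → Env
end

def Env.lookup : Env → ℕ → Option Clo
  | .nil, _ => none
  | .cons y c e, x => if y = x then some c else Env.lookup e x

def Env.dom : Env → Finset ℕ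
  | .nil => ∅
  | .cons x _ e => insert x (Env.dom e)

/-- Restriction `e|s` of an environment to a set of variables. -/
def Env.restrict : Env → Finset ℕ → Env
  | .nil, _ => .nil
  | .cons x c e, s => if x ∈ s then .cons x c (Env.restrict e s) else Env.restrict e s

mutual
  /-- Decoding of a closure into a λ-term. -/
  def Clo.decode : Clo → Term
    | .mk t e => Env.decode t e
  /-- Decoding: `(t, ε)↓ = t`, `(t, [x←c]·e)↓ = (t{x:=c↓}, e)↓`. -/
  def Env.decode : Term → Env → Term
    | t, .nil => t
    | t, .cons x c e => Env.decode (Term.subst x (Clo.decode c) t) e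
end

mutual
  /-- Hereditary number of closures in a closure (without sharing). -/
  def Clo.count : Clo → ℕ
    | .mk _ e => 1 + Env.count e
  def Env.count : Env → ℕ
    | .nil => 0
    | .cons _ c e => Clo.count c + Env.count e
end

mutual
  /-- A closure `(t,e)` is closed: `fv t ⊆ dom e` and hereditarily so. -/
  def Clo.Closed : Clo → Prop
    | .mk t e => t.fv ⊆ e.dom ∧ Env.ClosedE e
  def Env.ClosedE : Env → Prop
    | .nil => True
    | .cons _ c e => Clo.Closed c ∧ Env.ClosedE e
end

mutual
  /-- Environment domain invariant: `dom e = fv t`, hereditarily. -/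
  def Clo.DomInv : Clo → Prop
    | .mk t e => e.dom = t.fv ∧ Env.DomInvE e
  def Env.DomInvE : Env → Prop
    | .nil => True
    | .cons _ c e => Clo.DomInv c ∧ Env.DomInvE e
end

/-- Size of the left address of (the first occurrence of) `u` in the code `t0`:
the binary length of its index in the in-order enumeration of the constructors of `t0`. -/
def addrSize (t0 u : Term) : ℕ := Nat.size (t0.inorder.idxOf u)

mutual
  /-- Size of a closure, relative to the initial code `t0`. -/
  def Clo.size : Term → Clo → ℕ
    | t0, .mk u e => addrSize t0 u + Env.sizeE t0 e
  /-- Size of an environment, relative to the initial code `t0`. -/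
  def Env.sizeE : Term → Env → ℕ
    | _, .nil => 0
    | t0, .cons x c e => addrSize t0 (Term.var x) + Clo.size t0 c + Env.sizeE t0 e
end

def stackSize (t0 : Term) (S : List Clo) : ℕ := (S.map (Clo.size t0)).sum

/-- States of the (Naive/Space) KAM. -/
structure State where
  tm : Term
  env : Env
  stk : List Clo

/-- Size of a state, relative to the initial code `t0`. -/
def State.size (t0 : Term) (s : State) : ℕ :=
  addrSize t0 s.tm + Env.sizeE t0 s.env + stackSize t0 s.stk

/-- Closure count of a state: total number of closures occurring in it,
hereditarily and without sharing (the active term/environment pair is a closure). -/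
def State.count (s : State) : ℕ :=
  1 + Env.count s.env + (s.stk.map Clo.count).sum

def State.decode (s : State) : Term :=
  s.stk.foldl (fun a c => Term.app a c.decode) (Env.decode s.tm s.env)

def initState (t : Term) : State := ⟨t, .nil, []⟩

/-! The Naive KAM. -/
inductive NK : State → State → Prop
  | sea (t u : Term) (e : Env) (S : List Clo) :
      NK ⟨.app t u, e, S⟩ ⟨t, e, .mk u e :: S⟩
  | beta (x : ℕ) (t : Term) (e : Env) (c : Clo) (S : List Clo) :
      NK ⟨.lam x t, e, c :: S⟩ ⟨t, .cons x c e, S⟩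
  | sub {x : ℕ} {e : Env} {u : Term} {e' : Env} (S : List Clo) :
      Env.lookup e x = some (.mk u e') → NK ⟨.var x, e, S⟩ ⟨u, e', S⟩

def NKFinal (s : State) : Prop := ∀ s', ¬ NK s s'

/-- Naive KAM runs counting the number of β-transitions. -/
inductive NKRun : ℕ → State → State → Prop
  | refl (s : State) : NKRun 0 s s
  | sea {t u : Term} {e : Env} {S : List Clo} {s' : State} {n : ℕ} :
      NKRun n ⟨t, e, .mk u e :: S⟩ s' → NKRun n ⟨.app t u, e, S⟩ s'
  | beta {x : ℕ} {t : Term} {e : Env} {c : Clo} {S : List Clo} {s' : State} {n : ℕ} :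
      NKRun n ⟨t, .cons x c e, S⟩ s' → NKRun (n + 1) ⟨.lam x t, e, c :: S⟩ s'
  | sub {x : ℕ} {e : Env} {u : Term} {e' : Env} {S : List Clo} {s' : State} {n : ℕ} :
      Env.lookup e x = some (.mk u e') → NKRun n ⟨u, e', S⟩ s' → NKRun n ⟨.var x, e, S⟩ s'

/-! The Space KAM. -/
inductive SK : State → State → Prop
  | seav {t : Term} {x : ℕ} {e : Env} {c : Clo} (S : List Clo) :
      Env.lookup e x = some c →
      SK ⟨.app t (.var x), e, S⟩ ⟨t, e.restrict t.fv, c :: S⟩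
  | seanv {t u : Term} {e : Env} (S : List Clo) :
      (∀ x, u ≠ .var x) →
      SK ⟨.app t u, e, S⟩ ⟨t, e.restrict t.fv, .mk u (e.restrict u.fv) :: S⟩
  | betaw {x : ℕ} {t : Term} {e : Env} (c : Clo) (S : List Clo) :
      x ∉ t.fv → SK ⟨.lam x t, e, c :: S⟩ ⟨t, e, S⟩
  | betanw {x : ℕ} {t : Term} {e : Env} (c : Clo) (S : List Clo) :
      x ∈ t.fv → SK ⟨.lam x t, e, c :: S⟩ ⟨t, .cons x c e, S⟩
  | sub {x : ℕ} {e : Env} {u : Term} {e' : Env} (S : List Clo) :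
      Env.lookup e x = some (.mk u e') → SK ⟨.var x, e, S⟩ ⟨u, e', S⟩

def SKFinal (s : State) : Prop := ∀ s', ¬ SK s s'

/-- Space KAM runs counting the number of β-transitions (`→βw` and `→β¬w`). -/
inductive SKRun : ℕ → State → State → Prop
  | refl (s : State) : SKRun 0 s s
  | seav {t : Term} {x : ℕ} {e : Env} {c : Clo} {S : List Clo} {s' : State} {n : ℕ} :
      Env.lookup e x = some c →
      SKRun n ⟨t, e.restrict t.fv, c :: S⟩ s' → SKRun n ⟨.app t (.var x), e, S⟩ s'
  | seanv {t u : Term} {e : Env} {S : List Clo} {s' : State} {n : ℕ} :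
      (∀ x, u ≠ .var x) →
      SKRun n ⟨t, e.restrict t.fv, .mk u (e.restrict u.fv) :: S⟩ s' →
      SKRun n ⟨.app t u, e, S⟩ s'
  | betaw {x : ℕ} {t : Term} {e : Env} {c : Clo} {S : List Clo} {s' : State} {n : ℕ} :
      x ∉ t.fv → SKRun n ⟨t, e, S⟩ s' → SKRun (n + 1) ⟨.lam x t, e, c :: S⟩ s'
  | betanw {x : ℕ} {t : Term} {e : Env} {c : Clo} {S : List Clo} {s' : State} {n : ℕ} :
      x ∈ t.fv → SKRun n ⟨t, .cons x c e, S⟩ s' → SKRun (n + 1) ⟨.lam x t, e, c :: S⟩ s'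
  | sub {x : ℕ} {e : Env} {u : Term} {e' : Env} {S : List Clo} {s' : State} {n : ℕ} :
      Env.lookup e x = some (.mk u e') → SKRun n ⟨u, e', S⟩ s' → SKRun n ⟨.var x, e, S⟩ s'

/-! Concrete combinators. -/

/-- I := λx.x -/
def tmI : Term := .lam 0 (.var 0)
/-- θ := λx.λy.y (x x y)  (variables: x := 0, y := 1) -/
def tmTheta : Term := .lam 0 (.lam 1 (.app (.var 1) (.app (.app (.var 0) (.var 0)) (.var 1))))
/-- fix := θ θ -/
def tmFix : Term := .app tmTheta tmTheta
/-- x x y -/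
def xxy : Term := .app (.app (.var 0) (.var 0)) (.var 1)
/-- toyaux := λf.λz. z f f I  (f := 3, z := 2) -/
def tmToyaux : Term := .lam 3 (.lam 2 (.app (.app (.app (.var 2) (.var 3)) (.var 3)) tmI))
/-- toy := fix toyaux -/
def tmToy : Term := .app tmFix tmToyaux

/-- Scott encoding of binary strings (false = 0, true = 1; x0 := 4, x1 := 5, xε := 6):
`⟨ε⟩ := λx0.λx1.λxε.xε`, `⟨b·r⟩ := λx0.λx1.λxε.xb ⟨r⟩`. -/
def encStr : List Bool → Term
  | [] => .lam 4 (.lam 5 (.lam 6 (.var 6)))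
  | b :: r => .lam 4 (.lam 5 (.lam 6 (.app (.var (if b then 5 else 4)) (encStr r))))

/-- A variable fresh for `t`. -/
def freshVar (t : Term) : ℕ := t.fv.sup id + 1

/-- η-expansion: `η(t) := λx. t x` with `x ∉ fv t`. -/
def Term.eta (t : Term) : Term := .lam (freshVar t) (.app t (.var (freshVar t)))

/-- n-fold η-expansion. -/
def etaN (n : ℕ) (t : Term) : Term := Term.eta^[n] t

/-! Environment families for the Naive KAM scrolling invariant
(variables: x := 0, y := 1, z := 2, f := 3, x0 := 4, x1 := 5, xε := 6). -/

/-- `e0 := [x←(θ,ε)]·[y←(toyaux,ε)]`, `e(i+1) := [x←(x,ei)]·[y←(y,ei)]`. -/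
def eE : ℕ → Env
  | 0 => .cons 0 (.mk tmTheta .nil) (.cons 1 (.mk tmToyaux .nil) .nil)
  | i + 1 => .cons 0 (.mk (.var 0) (eE i)) (.cons 1 (.mk (.var 1) (eE i)) .nil)

/-- `e″0 := ε`, `e″(i+1) := [xε←(I,e′i)]·[x1←(f,e′i)]·[x0←(f,e′i)]·e″i`
(with `e′i` inlined). -/
def eDD (s : List Bool) : ℕ → Env
  | 0 => .nil
  | i + 1 =>
    let ep : Env := .cons 2 (.mk (encStr (s.drop i)) (eDD s i)) (.cons 3 (.mk xxy (eE i)) .nil)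
    .cons 6 (.mk tmI ep) (.cons 5 (.mk (.var 3) ep) (.cons 4 (.mk (.var 3) ep) (eDD s i)))

/-- `e′i := [z←(⟨b(i+1)⋯bn⟩, e″i)]·[f←(x x y, ei)]`. -/
def eP (s : List Bool) (i : ℕ) : Env :=
  .cons 2 (.mk (encStr (s.drop i)) (eDD s i)) (.cons 3 (.mk xxy (eE i)) .nil)

/-! The family `tn` for the abstract-time overhead explosion
(variables `xi := i`). -/

/-- `x0 x1 ⋯ xn`. -/
def varsApp : ℕ → Term
  | 0 => .var 0
  | n + 1 => .app (varsApp n) (.var (n + 1))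

/-- Term component of `Sn`: `x0 x0` for `n = 0`, `x0 ⋯ xn` for `n ≥ 1`. -/
def sTerm : ℕ → Term
  | 0 => .app (.var 0) (.var 0)
  | n + 1 => varsApp (n + 1)

/-- `e0 := [x0←(I,ε)]`, `e(n+1) := [x(n+1)←Sn]·en`. -/
def eN : ℕ → Env
  | 0 => .cons 0 (.mk tmI .nil) .nil
  | n + 1 => .cons (n + 1) (.mk (sTerm n) (eN n)) (eN n)

/-- `Sn := (sTerm n, en)`. -/
def sClo (n : ℕ) : Clo := .mk (sTerm n) (eN n)

/-- `Ci⟨t⟩ := λxi. t (x0 ⋯ xi)` (with `C0⟨t⟩ = λx0. t (x0 x0)`). -/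
def cPlug (i : ℕ) (t : Term) : Term := .lam i (.app t (sTerm i))

/-- `C0⟨C1⟨⋯Cn⟨t⟩⋯⟩⟩`. -/
def nest (n : ℕ) (t : Term) : Term := (List.range (n + 1)).foldr cPlug t

/-- `tn := C0⟨C1⟨⋯Cn⟨λy.I⟩⋯⟩⟩ I`. -/
def tN (n : ℕ) : Term := .app (nest n (.lam 1 tmI)) tmI

/-! Global-copy scrolling terms (s′ := 7, z := 2, x := 0, f := 3). -/

/-- `λf.λs′. s′ f f z` (free variable z). -/
def tScroll : Term :=
  .lam 3 (.lam 7 (.app (.app (.app (.var 7) (.var 3)) (.var 3)) (.var 2)))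

/-- `glCpy := λx.( fix (λf.λs′. s′ f f x) ) x`. -/
def glCpy : Term :=
  .lam 0 (.app (.app tmFix
    (.lam 3 (.lam 7 (.app (.app (.app (.var 7) (.var 3)) (.var 3)) (.var 0)))))
    (.var 0))

/-! The Space LAM. -/

structure LState where
  dump : List (Clo × List Clo)
  tm : Term
  env : Env
  stk : List Clo

inductive LAM : LState → LState → Prop
  | sea {D : List (Clo × List Clo)} {t u : Term} {e : Env} {S : List Clo} :
      LAM ⟨D, .app t u, e, S⟩ ⟨(.mk t (e.restrict t.fv), S) :: D, u, e.restrict u.fv, []⟩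
  | ret {D : List (Clo × List Clo)} {u : Term} {e' : Env} {S : List Clo}
      {x : ℕ} {t : Term} {e : Env} :
      LAM ⟨(.mk u e', S) :: D, .lam x t, e, []⟩ ⟨D, u, e', .mk (.lam x t) e :: S⟩
  | betaw {D : List (Clo × List Clo)} {x : ℕ} {t : Term} {e : Env} {c : Clo} {S : List Clo} :
      x ∉ t.fv → LAM ⟨D, .lam x t, e, c :: S⟩ ⟨D, t, e, S⟩
  | betanw {D : List (Clo × List Clo)} {x : ℕ} {t : Term} {e : Env} {c : Clo} {S : List Clo} :
      x ∈ t.fv → LAM ⟨D, .lam x t, e, c :: S⟩ ⟨D, t, .cons x c e, S⟩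
  | sub {D : List (Clo × List Clo)} {x : ℕ} {e : Env} {u : Term} {e' : Env} {S : List Clo} :
      Env.lookup e x = some (.mk u e') → LAM ⟨D, .var x, e, S⟩ ⟨D, u, e', S⟩

def LFinal (ls : LState) : Prop := ∀ ls', ¬ LAM ls ls'

/-- The Space KAM state `(t,e,S)` seen as the Space LAM state `(ε,t,e,S)`. -/
def embed (s : State) : LState := ⟨[], s.tm, s.env, s.stk⟩

def lInit (t : Term) : LState := ⟨[], t, .nil, []⟩

def LState.size (t0 : Term) (ls : LState) : ℕ :=
  (ls.dump.map (fun p => Clo.size t0 p.1 + stackSize t0 p.2)).sum +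
    addrSize t0 ls.tm + Env.sizeE t0 ls.env + stackSize t0 ls.stk

/-- A LAM-sequence from `a` whose first state with empty dump after `a` is its target. -/
inductive LRunToEmpty : LState → LState → Prop
  | single {a b : LState} : LAM a b → b.dump = [] → LRunToEmpty a b
  | cons {a b c : LState} : LAM a b → b.dump ≠ [] → LRunToEmpty b c → LRunToEmpty a c

/-! Log-sensitive Turing machines. -/

/-- Input-tape alphabet {0, 1, L, R}. -/
inductive ISym : Type | zero | one | lend | rend
deriving DecidableEq

/-- Work-tape alphabet {0, 1, □}. -/
inductive WSym : Type | zero | one | blank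
deriving DecidableEq

/-- Head moves. -/
inductive Move : Type | L | R | N
deriving DecidableEq

/-- A log-sensitive Turing machine: states `Fin n`, initial state, final states
`qtrue = s1` and `qfalse = s0`, and a deterministic transition function reading the
current state and the two scanned symbols, writing on the work tape, moving both
heads, and changing state (`none` = halt). -/
structure TM where
  n : ℕ
  start : Fin n
  qtrue : Fin n
  qfalse : Fin n
  δ : Fin n → ISym → WSym → Option (Fin n × WSym × Move × Move)

/-- A configuration: state, input-head position (on the tape `L i R`), and the
work tape split as (left part, reversed) / scanned symbol / (right part). -/
structure Config (M : TM) where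
  q : Fin M.n
  ipos : ℕ
  wl : List WSym
  wcur : WSym
  wr : List WSym

/-- The symbol of the input tape `L i R` at a given position. -/
def inputAt (i : List Bool) (p : ℕ) : ISym :=
  if p = 0 then .lend
  else if h : p - 1 < i.length then (if i.get ⟨p - 1, h⟩ then .one else .zero)
  else .rend

def moveIpos (p : ℕ) : Move → ℕ
  | .L => p - 1
  | .R => p + 1
  | .N => p

def moveWork (wl : List WSym) (c : WSym) (wr : List WSym) : Move → List WSym × WSym × List WSym
  | .L => match wl with
    | [] => ([], .blank, c :: wr)
    | a :: l => (l, a, c :: wr)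
  | .R => match wr with
    | [] => (c :: wl, .blank, [])
    | a :: r => (c :: wl, a, r)
  | .N => (wl, c, wr)

/-- One transition of the TM `M` on input `i`. -/
def TMStep (M : TM) (i : List Bool) (c c' : Config M) : Prop :=
  ∃ q' w mi mw, M.δ c.q (inputAt i c.ipos) c.wcur = some (q', w, mi, mw) ∧
    c'.q = q' ∧ c'.ipos = moveIpos c.ipos mi ∧
    (c'.wl, c'.wcur, c'.wr) = moveWork c.wl w c.wr mw

def initConfig (M : TM) : Config M := ⟨M.start, 0, [], .blank, []⟩

/-- Number of work-tape cells used by a configuration. -/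
def Config.workSize {M : TM} (c : Config M) : ℕ := c.wl.length + 1 + c.wr.length

def TMFinal (M : TM) (i : List Bool) (c : Config M) : Prop := ∀ c', ¬ TMStep M i c c'

/-- `⟨1⟩ := λx.λy.x` and `⟨0⟩ := λx.λy.y`. -/
def encBool (b : Bool) : Term :=
  if b then .lam 0 (.lam 1 (.var 0)) else .lam 0 (.lam 1 (.var 1))

/-!
On states whose environments hereditarily bind the free variables of their codes (an invariant
of runs from closed terms), decoding turns the Space KAM into weak head reduction. The `→sea`
and `→sub` transitions leave the decoding unchanged, because restricting an environment to the
free variables of its code does not change the decoded term; each β-transition performs exactly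
one `→wh` step on the decoding, because substituting a closed term commutes with the
substitutions of the environment. Conversely, runs without β-transitions terminate, and they end
in an abstraction, which is either final with a weak head normal decoding or makes a
β-transition. Since `→wh` is deterministic, this matches a complete `→wh`-sequence of length `n`
with a complete run with `n` β-transitions.
-/

namespace Term

theorem subst_eq_self {x : ℕ} {u t : Term} (hx : x ∉ t.fv) : subst x u t = t := by
  induction t with
  | var y => simp_all [subst, fv, eq_comm]
  | lam y t ih =>
    by_cases hy : y = x
    · simp [subst, hy]
    · simp only [fv, Finset.mem_sdiff, Finset.mem_singleton, not_and_not_right] at hx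
      simp [subst, hy, ih fun h => hy (hx h).symm]
  | app t r iht ihr => simp_all [subst, fv]

theorem fv_subst_subset {x : ℕ} {u : Term} (hu : u.fv = ∅) (t : Term) :
    (subst x u t).fv ⊆ t.fv \ {x} := by
  induction t with
  | var y => by_cases hy : y = x <;> simp [subst, fv, hy, hu]
  | lam y t ih =>
    by_cases hy : y = x
    · subst hy
      simp [subst, fv]
    · simp only [subst, hy, if_false, fv]
      exact (Finset.sdiff_subset_sdiff ih subset_rfl).trans (by rw [sdiff_right_comm])
  | app t r iht ihr =>
    simp only [subst, fv, Finset.union_sdiff_distrib]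
    exact Finset.union_subset_union iht ihr

theorem subst_comm {x y : ℕ} {u v : Term} (hxy : x ≠ y) (hu : u.fv = ∅) (hv : v.fv = ∅)
    (t : Term) : subst x u (subst y v t) = subst y v (subst x u t) := by
  induction t with
  | var z => by_cases hzy : z = y <;> by_cases hzx : z = x <;> simp_all [subst, subst_eq_self]
  | lam z t ih => by_cases hzy : z = y <;> by_cases hzx : z = x <;> simp_all [subst]
  | app t r iht ihr => simp [subst, iht, ihr]

end Term

namespace Env

theorem dom_restrict : ∀ (e : Env) (s : Finset ℕ), (e.restrict s).dom = e.dom ∩ s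
  | .nil, _ => by simp [restrict, dom]
  | .cons x _ e, s => by
    by_cases hx : x ∈ s <;>
      simp [restrict, dom, hx, dom_restrict e s, Finset.insert_inter_of_mem,
        Finset.insert_inter_of_notMem]

theorem closedE_restrict : ∀ {e : Env} (s : Finset ℕ), e.ClosedE → (e.restrict s).ClosedE
  | .nil, _, _ => trivial
  | .cons x _ e, s, ⟨hc, he⟩ => by
    by_cases hx : x ∈ s
    · simpa [restrict, hx, ClosedE] using ⟨hc, closedE_restrict s he⟩
    · simpa [restrict, hx] using closedE_restrict s he

theorem count_restrict_le : ∀ (e : Env) (s : Finset ℕ), (e.restrict s).count ≤ e.count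
  | .nil, _ => le_rfl
  | .cons x _ e, s => by
    have := count_restrict_le e s
    by_cases hx : x ∈ s <;> simp only [restrict, hx, if_true, if_false, count] <;> omega

theorem closed_of_lookup : ∀ {e : Env} {x : ℕ} {c : Clo}, e.ClosedE → e.lookup x = some c →
    c.Closed
  | .nil, _, _, _, hl => by simp [lookup] at hl
  | .cons y _ e, x, _, ⟨hc, he⟩, hl => by
    by_cases hy : y = x
    · simp_all [lookup]
    · simp only [lookup, hy, if_false] at hl
      exact closed_of_lookup he hl

theorem exists_lookup_of_mem_dom : ∀ {e : Env} {x : ℕ}, x ∈ e.dom → ∃ c, e.lookup x = some c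
  | .nil, _, h => by simp [dom] at h
  | .cons y c e, x, h => by
    by_cases hy : y = x
    · exact ⟨c, by simp [lookup, hy]⟩
    · have hx : x ∈ e.dom := by simpa [dom, Ne.symm hy] using h
      simpa [lookup, hy] using exists_lookup_of_mem_dom hx

theorem count_lt_of_lookup : ∀ {e : Env} {x : ℕ} {u : Term} {e' : Env},
    e.lookup x = some (.mk u e') → e'.count < e.count
  | .nil, _, _, _, hl => by simp [lookup] at hl
  | .cons y c e, x, _, _, hl => by
    by_cases hy : y = x
    · simp only [lookup, hy, if_true, Option.some.injEq] at hl
      subst hl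
      simp only [count, Clo.count]
      omega
    · simp only [lookup, hy, if_false] at hl
      have := count_lt_of_lookup hl
      simp only [count]
      omega

theorem decode_app : ∀ (e : Env) (t u : Term), decode (.app t u) e = .app (decode t e) (decode u e)
  | .nil, _, _ => rfl
  | .cons _ _ e, _, _ => decode_app e _ _

theorem decode_eq_self : ∀ (e : Env) {t : Term}, t.fv = ∅ → decode t e = t
  | .nil, _, _ => rfl
  | .cons _ _ e, _, h => by
    rw [decode, Term.subst_eq_self (by simp [h]), decode_eq_self e h]

end Env

mutual

theorem Clo.fv_decode : ∀ {c : Clo}, c.Closed → c.decode.fv = ∅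
  | .mk t e, ⟨ht, he⟩ => by
    rw [Clo.decode, ← Finset.subset_empty, ← Finset.sdiff_eq_empty_iff_subset.2 ht]
    exact Env.fv_decode_subset he t

theorem Env.fv_decode_subset : ∀ {e : Env}, e.ClosedE → ∀ t : Term,
    (Env.decode t e).fv ⊆ t.fv \ e.dom
  | .nil, _, t => by simp [Env.decode, Env.dom]
  | .cons x c e, ⟨hc, he⟩, t => by
    refine (Env.fv_decode_subset he _).trans fun a => ?_
    have := @Term.fv_subst_subset x c.decode (Clo.fv_decode hc) t a
    simp only [Env.dom, Finset.mem_sdiff, Finset.mem_singleton, Finset.mem_insert] at this ⊢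
    tauto

end

namespace Env

theorem decode_restrict : ∀ {e : Env}, e.ClosedE → ∀ {t : Term} {s : Finset ℕ}, t.fv ⊆ s →
    decode t (e.restrict s) = decode t e
  | .nil, _, _, _, _ => rfl
  | .cons x c e, ⟨hc, he⟩, t, s, hts => by
    by_cases hx : x ∈ s
    · simp only [restrict, hx, if_true, decode]
      exact decode_restrict he <|
        (Term.fv_subst_subset (Clo.fv_decode hc) t).trans (Finset.sdiff_subset.trans hts)
    · simp only [restrict, hx, if_false, decode, Term.subst_eq_self fun h => hx (hts h)]
      exact decode_restrict he hts

theorem decode_var : ∀ {e : Env}, e.ClosedE → ∀ {x : ℕ} {c : Clo}, e.lookup x = some c →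
    decode (.var x) e = c.decode
  | .nil, _, _, _, hl => by simp [lookup] at hl
  | .cons y c' e, ⟨hc, he⟩, x, c, hl => by
    by_cases hy : y = x
    · simp only [lookup, hy, if_true, Option.some.injEq] at hl
      subst hl hy
      simp only [decode, Term.subst, if_true]
      exact decode_eq_self e (Clo.fv_decode hc)
    · simp only [lookup, hy, if_false] at hl
      simp only [decode, Term.subst, Ne.symm hy, if_false]
      exact decode_var he hl

theorem exists_decode_lam : ∀ (e : Env) (x : ℕ) (t : Term), ∃ y r, decode (.lam x t) e = .lam y r
  | .nil, x, t => ⟨x, t, rfl⟩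
  | .cons z c e, x, t => by
    by_cases hz : x = z
    · simpa [decode, Term.subst, hz] using exists_decode_lam e x t
    · simpa [decode, Term.subst, hz] using exists_decode_lam e x (Term.subst z c.decode t)

theorem whr_decode_lam_app : ∀ {e : Env}, e.ClosedE → ∀ (x : ℕ) (t : Term) {v : Term},
    v.fv = ∅ → Whr (.app (decode (.lam x t) e) v) (decode (Term.subst x v t) e)
  | .nil, _, x, t, v, _ => Whr.beta x t v
  | .cons y c e, ⟨hc, he⟩, x, t, v, hv => by
    by_cases hxy : x = y
    · subst hxy
      simp only [decode, Term.subst, if_true]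
      rw [Term.subst_eq_self (t := Term.subst x v t) fun h => by
        simpa using Term.fv_subst_subset hv t h]
      exact whr_decode_lam_app he x t hv
    · simp only [decode, Term.subst, hxy, if_false]
      rw [← Term.subst_comm hxy hv (Clo.fv_decode hc) t]
      exact whr_decode_lam_app he x _ hv

end Env

theorem Whr.foldl_app {a b : Term} (h : Whr a b) :
    ∀ S : List Clo, Whr (S.foldl (fun r c => .app r c.decode) a)
      (S.foldl (fun r c => .app r c.decode) b)
  | [] => h
  | _ :: S => (h.appL _).foldl_app S

theorem Whr.det {a b b' : Term} (h : Whr a b) (h' : Whr a b') : b = b' := by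
  induction h generalizing b' with
  | beta => cases h' with
    | beta => rfl
    | appL _ h' => cases h'
  | appL _ h ih => cases h' with
    | beta => cases h
    | appL _ h' => rw [ih h']

theorem NSteps.eq_of_zero {α : Type*} {R : α → α → Prop} {a b : α} (h : NSteps R 0 a b) :
    a = b := by
  cases h
  rfl

theorem NSteps.eq_of_whNormal {n : ℕ} {a u : Term} (ha : WhNormal a) (h : NSteps Whr n a u) :
    n = 0 ∧ u = a := by
  cases h with
  | refl => exact ⟨rfl, rfl⟩
  | head hab _ => exact absurd hab (ha _)

theorem NSteps.of_whr {n : ℕ} {a b u : Term} (hab : Whr a b) (hu : WhNormal u)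
    (h : NSteps Whr n a u) : ∃ m, n = m + 1 ∧ NSteps Whr m b u := by
  cases h with
  | refl => exact absurd hab (hu _)
  | head hab' h => exact ⟨_, rfl, hab.det hab' ▸ h⟩

def State.Closed (s : State) : Prop :=
  s.tm.fv ⊆ s.env.dom ∧ s.env.ClosedE ∧ ∀ c ∈ s.stk, c.Closed

namespace State

theorem closed_initState {t : Term} (ht : t.closed) : (initState t).Closed :=
  ⟨Eq.subset ht, trivial, by simp [initState]⟩

theorem whNormal_decode_lam_nil {x : ℕ} {t : Term} {e : Env} :
    WhNormal (decode ⟨.lam x t, e, []⟩) := by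
  obtain ⟨y, r, hr⟩ := Env.exists_decode_lam e x t
  intro w h
  simp only [decode, List.foldl_nil, hr] at h
  cases h

theorem decode_cons_of_notMem {x : ℕ} {t : Term} {e : Env} {c : Clo} {S : List Clo}
    (hx : x ∉ t.fv) : decode ⟨t, .cons x c e, S⟩ = decode ⟨t, e, S⟩ := by
  simp only [decode, Env.decode, Term.subst_eq_self hx]

namespace Closed

variable {t : Term} {x : ℕ} {e : Env} {c : Clo} {S : List Clo}

theorem exists_lookup {s : State} (hs : s.Closed) (hx : x ∈ s.tm.fv) :
    ∃ c, s.env.lookup x = some c :=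
  Env.exists_lookup_of_mem_dom (hs.1 hx)

theorem seav (hs : Closed ⟨.app t (.var x), e, S⟩) (hl : e.lookup x = some c) :
    Closed ⟨t, e.restrict t.fv, c :: S⟩ ∧
      decode ⟨t, e.restrict t.fv, c :: S⟩ = decode ⟨.app t (.var x), e, S⟩ := by
  obtain ⟨htm, he, hS⟩ := hs
  simp only [Term.fv, Finset.union_subset_iff] at htm
  refine ⟨⟨?_, Env.closedE_restrict _ he, ?_⟩, ?_⟩
  · rw [Env.dom_restrict]
    exact Finset.subset_inter htm.1 subset_rfl
  · simpa using ⟨Env.closed_of_lookup he hl, hS⟩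
  · simp only [decode, List.foldl_cons, Env.decode_app, Env.decode_restrict he subset_rfl,
      Env.decode_var he hl]

theorem seanv {u : Term} (hs : Closed ⟨.app t u, e, S⟩) :
    Closed ⟨t, e.restrict t.fv, .mk u (e.restrict u.fv) :: S⟩ ∧
      decode ⟨t, e.restrict t.fv, .mk u (e.restrict u.fv) :: S⟩ = decode ⟨.app t u, e, S⟩ := by
  obtain ⟨htm, he, hS⟩ := hs
  simp only [Term.fv, Finset.union_subset_iff] at htm
  refine ⟨⟨?_, Env.closedE_restrict _ he, ?_⟩, ?_⟩
  · rw [Env.dom_restrict]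
    exact Finset.subset_inter htm.1 subset_rfl
  · simpa [Clo.Closed, Env.dom_restrict] using
      ⟨⟨Finset.subset_inter htm.2 subset_rfl, Env.closedE_restrict _ he⟩, hS⟩
  · simp only [decode, List.foldl_cons, Env.decode_app, Clo.decode,
      Env.decode_restrict he subset_rfl]

theorem sub {u : Term} {e' : Env} (hs : Closed ⟨.var x, e, S⟩)
    (hl : e.lookup x = some (.mk u e')) :
    Closed ⟨u, e', S⟩ ∧ decode ⟨u, e', S⟩ = decode ⟨.var x, e, S⟩ := by
  obtain ⟨-, he, hS⟩ := hs
  obtain ⟨hu, he'⟩ := Env.closed_of_lookup he hl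
  exact ⟨⟨hu, he', hS⟩, by simp only [decode, Env.decode_var he hl, Clo.decode]⟩

theorem betaw (hx : x ∉ t.fv) (hs : Closed ⟨.lam x t, e, c :: S⟩) : Closed ⟨t, e, S⟩ := by
  obtain ⟨htm, he, hS⟩ := hs
  refine ⟨fun a ha => htm ?_, he, fun c' hc' => hS c' (List.mem_cons_of_mem _ hc')⟩
  simp only [Term.fv, Finset.mem_sdiff, Finset.mem_singleton]
  exact ⟨ha, by rintro rfl; exact hx ha⟩

theorem betanw (hs : Closed ⟨.lam x t, e, c :: S⟩) : Closed ⟨t, .cons x c e, S⟩ := by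
  obtain ⟨htm, he, hS⟩ := hs
  refine ⟨?_, ⟨hS c List.mem_cons_self, he⟩, fun c' hc' => hS c' (List.mem_cons_of_mem _ hc')⟩
  rw [Env.dom, Finset.subset_insert_iff, ← Finset.sdiff_singleton_eq_erase]
  exact htm

theorem whr_beta (hs : Closed ⟨.lam x t, e, c :: S⟩) :
    Whr (decode ⟨.lam x t, e, c :: S⟩) (decode ⟨t, .cons x c e, S⟩) :=
  (Env.whr_decode_lam_app hs.2.1 x t (Clo.fv_decode (hs.2.2 c List.mem_cons_self))).foldl_app S

end Closed

end State

theorem SKRun.trans {m n : ℕ} {a b c : State} (hab : SKRun m a b) (hbc : SKRun n b c) :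
    SKRun (m + n) a c := by
  induction hab with
  | refl => simpa using hbc
  | seav hl _ ih => exact .seav hl (ih hbc)
  | seanv hu _ ih => exact .seanv hu (ih hbc)
  | betaw hx _ ih => rw [Nat.add_right_comm]; exact .betaw hx (ih hbc)
  | betanw hx _ ih => rw [Nat.add_right_comm]; exact .betanw hx (ih hbc)
  | sub hl _ ih => exact .sub hl (ih hbc)

theorem SKRun.closed_and_nsteps_decode {n : ℕ} {s s' : State} (h : SKRun n s s')
    (hs : s.Closed) : s'.Closed ∧ NSteps Whr n s.decode s'.decode := by
  induction h with
  | refl => exact ⟨hs, .refl _⟩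
  | seav hl _ ih => obtain ⟨hs', hd⟩ := hs.seav hl; exact hd ▸ ih hs'
  | seanv _ _ ih => obtain ⟨hs', hd⟩ := hs.seanv; exact hd ▸ ih hs'
  | sub hl _ ih => obtain ⟨hs', hd⟩ := hs.sub hl; exact hd ▸ ih hs'
  | betaw hx _ ih =>
    obtain ⟨hs', hd⟩ := ih (hs.betaw hx)
    exact ⟨hs', .head (State.decode_cons_of_notMem hx ▸ hs.whr_beta) hd⟩
  | betanw _ _ ih =>
    obtain ⟨hs', hd⟩ := ih hs.betanw
    exact ⟨hs', .head hs.whr_beta hd⟩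

-- Termination: `→sub` shrinks the environment, `→sea` does not enlarge it and shrinks the code.
theorem State.Closed.exists_run_to_lam : ∀ {t : Term} {e : Env} {S : List Clo},
    Closed ⟨t, e, S⟩ → ∃ x t' e' S', SKRun 0 ⟨t, e, S⟩ ⟨.lam x t', e', S'⟩
  | .lam x t, e, S, _ => ⟨x, t, e, S, .refl _⟩
  | .var x, e, S, hs => by
    obtain ⟨⟨u, e'⟩, hl⟩ := hs.exists_lookup (Finset.mem_singleton_self x)
    obtain ⟨y, t', e'', S', h⟩ := (hs.sub hl).1.exists_run_to_lam
    exact ⟨y, t', e'', S', .sub hl h⟩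
  | .app t u, e, S, hs => by
    match u with
    | .var x =>
      obtain ⟨c, hl⟩ := hs.exists_lookup (x := x) (by simp [Term.fv])
      obtain ⟨y, t', e'', S', h⟩ := (hs.seav hl).1.exists_run_to_lam
      exact ⟨y, t', e'', S', .seav hl h⟩
    | .lam .. | .app .. =>
      obtain ⟨y, t', e'', S', h⟩ := hs.seanv.1.exists_run_to_lam
      exact ⟨y, t', e'', S', .seanv (fun _ => Term.noConfusion) h⟩
termination_by t e => (e.count, sizeOf t)
decreasing_by
  · exact Prod.Lex.left _ _ (Env.count_lt_of_lookup hl)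
  all_goals
    rcases (Env.count_restrict_le e t.fv).lt_or_eq with h | h
    · exact Prod.Lex.left _ _ h
    · rw [h]
      exact Prod.Lex.right _ (by simp; omega)

theorem State.Closed.whNormal_decode_of_final {s : State} (hs : s.Closed) (hf : SKFinal s) :
    WhNormal s.decode := by
  obtain ⟨t, e, S⟩ := s
  match t, S with
  | .lam x t, [] => exact State.whNormal_decode_lam_nil
  | .lam x t, c :: S =>
    by_cases hx : x ∈ t.fv
    · exact absurd (SK.betanw c S hx) (hf _)
    · exact absurd (SK.betaw c S hx) (hf _)
  | .var x, S =>
    obtain ⟨⟨u, e'⟩, hl⟩ := hs.exists_lookup (Finset.mem_singleton_self x)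
    exact absurd (SK.sub S hl) (hf _)
  | .app t (.var x), S =>
    obtain ⟨c, hl⟩ := hs.exists_lookup (x := x) (by simp [Term.fv])
    exact absurd (SK.seav S hl) (hf _)
  | .app t (.lam ..), S | .app t (.app ..), S =>
    exact absurd (SK.seanv S fun _ => Term.noConfusion) (hf _)

theorem State.Closed.exists_run_of_nsteps {n : ℕ} {s : State} {u : Term} (hs : s.Closed)
    (h : NSteps Whr n s.decode u) (hu : WhNormal u) :
    ∃ s', SKRun n s s' ∧ SKFinal s' ∧ s'.decode = u := by
  induction n using Nat.strong_induction_on generalizing s with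
  | _ n ih =>
  obtain ⟨x, t, e, S, hrun⟩ := hs.exists_run_to_lam
  obtain ⟨hs₁, hd⟩ := hrun.closed_and_nsteps_decode hs
  rw [hd.eq_of_zero] at h
  cases S with
  | nil =>
    obtain ⟨rfl, rfl⟩ := h.eq_of_whNormal State.whNormal_decode_lam_nil
    exact ⟨_, hrun, (fun _ h => by cases h), rfl⟩
  | cons c S =>
    obtain ⟨m, rfl, hm⟩ := h.of_whr hs₁.whr_beta hu
    by_cases hx : x ∈ t.fv
    · obtain ⟨s', hr, hf, hd⟩ := ih m m.lt_succ_self hs₁.betanw hm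
      exact ⟨s', by simpa using hrun.trans (.betanw hx hr), hf, hd⟩
    · rw [State.decode_cons_of_notMem hx] at hm
      obtain ⟨s', hr, hf, hd⟩ := ih m m.lt_succ_self (hs₁.betaw hx) hm
      exact ⟨s', by simpa using hrun.trans (.betaw hx hr), hf, hd⟩

/-- The Space KAM implements Closed Call-by-Name
(β-transitions of the machine are `→βw` and `→β¬w`). -/
theorem space_kam_implements_closed_cbn
    (t : Term) (ht : t.closed) (n : ℕ) (u : Term) :
    (NSteps Whr n t u ∧ WhNormal u) ↔
      (∃ s : State, SKRun n (initState t) s ∧ SKFinal s ∧ s.decode = u) := by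
  have hinit := State.closed_initState ht
  constructor
  · rintro ⟨hsteps, hu⟩
    exact hinit.exists_run_of_nsteps hsteps hu
  · rintro ⟨s, hrun, hf, rfl⟩
    obtain ⟨hs, hsteps⟩ := hrun.closed_and_nsteps_decode hinit
    exact ⟨hsteps, hs.whNormal_decode_of_final hf⟩
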